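/- arXiv:2112.10020 — 2 statements merged into one kernel-verified Lean document; each statement's English description precedes it below -/
import Mathlib

section
/- Let Π₀ and Π₁ be orthogonal projectors on a finite-dimensional Hilbert space. Then for every unit vector |ψ⟩, ⟨ψ|(Π₀ + Π₁)|ψ⟩ ≤ 1 + 3√(Tr(Π₀Π₁)). -/
/-!
Write `x = α + β` with `α = Π₀x` and `β = (1 - Π₀)x`, so that `‖α‖² + ‖β‖² = 1`. Then
`⟨x, Π₀x⟩ = ‖α‖²` and `⟨x, Π₁x⟩ = ‖Π₁x‖² ≤ (‖Π₁α‖ + ‖β‖)²`; as `‖Π₁α‖ ≤ ‖α‖ ≤ 1` and `‖β‖ ≤ 1`,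
the sum is at most `1 + 3‖Π₁Π₀x‖`. Finally `‖Π₁Π₀x‖` is bounded by the Frobenius norm of `Π₁Π₀`,
whose square is `Tr(Π₀Π₁Π₁Π₀) = Tr(Π₀Π₁)`.
-/

open Matrix RCLike InnerProductSpace WithLp

section InnerProductSpace

variable {𝕜 E : Type*} [RCLike 𝕜] [NormedAddCommGroup E] [InnerProductSpace 𝕜 E]

theorem Submodule.re_inner_starProjection_add_le (U V : Submodule 𝕜 E)
    [U.HasOrthogonalProjection] [V.HasOrthogonalProjection] {x : E} (hx : ‖x‖ = 1) :
    re ⟪x, U.starProjection x + V.starProjection x⟫_𝕜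
      ≤ 1 + 3 * ‖V.starProjection (U.starProjection x)‖ := by
  set a := ‖V.starProjection (U.starProjection x)‖
  set b := ‖Uᗮ.starProjection x‖
  set c := ‖U.starProjection x‖
  have hcb : c ^ 2 + b ^ 2 = 1 := by
    rw [← one_pow 2, ← hx, U.norm_sq_eq_add_norm_sq_starProjection x]
  have hac : a ≤ c := V.norm_starProjection_apply_le _
  have hVx : ‖V.starProjection x‖ ≤ a + b := calc
    ‖V.starProjection x‖
        = ‖V.starProjection (U.starProjection x) + V.starProjection (Uᗮ.starProjection x)‖ := by
      rw [← map_add, U.starProjection_add_starProjection_orthogonal]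
    _ ≤ a + b := (norm_add_le _ _).trans (by gcongr; exact V.norm_starProjection_apply_le _)
  have hquad : re ⟪x, U.starProjection x + V.starProjection x⟫_𝕜
      = c ^ 2 + ‖V.starProjection x‖ ^ 2 := by
    rw [inner_add_right, map_add, inner_re_symm, inner_re_symm x,
      U.re_inner_starProjection_eq_normSq, V.re_inner_starProjection_eq_normSq]
    rfl
  have ha0 : 0 ≤ a := norm_nonneg _
  have hb1 : b ≤ 1 := by nlinarith [sq_nonneg c]
  have ha1 : a ≤ 1 := hac.trans (by nlinarith [norm_nonneg (U.starProjection x)])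
  rw [hquad]
  nlinarith [pow_le_pow_left₀ (norm_nonneg _) hVx 2,
    mul_le_mul_of_nonneg_left hb1 ha0, mul_le_mul_of_nonneg_left ha1 ha0]

theorem LinearMap.IsSymmetricProjection.re_inner_add_le {p q : E →ₗ[𝕜] E}
    (hp : p.IsSymmetricProjection) (hq : q.IsSymmetricProjection) {x : E} (hx : ‖x‖ = 1) :
    re ⟪x, p x + q x⟫_𝕜 ≤ 1 + 3 * ‖q (p x)‖ := by
  obtain ⟨U, _, rfl⟩ := isSymmetricProjection_iff_eq_coe_starProjection.mp hp
  obtain ⟨V, _, rfl⟩ := isSymmetricProjection_iff_eq_coe_starProjection.mp hq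
  exact U.re_inner_starProjection_add_le V hx

end InnerProductSpace

namespace Matrix

variable {𝕜 m n : Type*} [RCLike 𝕜] [Fintype m] [Fintype n]

theorem re_trace_conjTranspose_mul_self (B : Matrix m n 𝕜) :
    re (Bᴴ * B).trace = ∑ i, ∑ j, ‖B i j‖ ^ 2 := by
  simp only [trace, diag, mul_apply, conjTranspose_apply, RCLike.star_def, RCLike.conj_mul,
    map_sum, ← ofReal_pow, ofReal_re]
  exact Finset.sum_comm

attribute [local instance] frobeniusNormedAddCommGroup in
theorem frobenius_norm_eq_sqrt_re_trace (B : Matrix m n 𝕜) :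
    ‖B‖ = √(re (Bᴴ * B).trace) := by
  simp [frobenius_norm_def, re_trace_conjTranspose_mul_self, Real.sqrt_eq_rpow]

attribute [local instance] frobeniusNormedAddCommGroup in
theorem norm_toEuclideanLin_apply_le [DecidableEq n] (B : Matrix m n 𝕜)
    (x : EuclideanSpace 𝕜 n) : ‖toEuclideanLin B x‖ ≤ √(re (Bᴴ * B).trace) * ‖x‖ := by
  have h := frobenius_norm_mul B (replicateCol Unit (ofLp x))
  rwa [← replicateCol_mulVec, frobenius_norm_replicateCol, frobenius_norm_replicateCol,
    toLp_ofLp, frobenius_norm_eq_sqrt_re_trace] at h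

theorem isSymmetricProjection_toEuclideanLin [DecidableEq n] {Q : Matrix n n 𝕜}
    (hQ : IsStarProjection Q) : (toEuclideanLin Q).IsSymmetricProjection where
  isIdempotentElem := hQ.isIdempotentElem.map (toLpLinAlgEquiv (p := 2))
  isSymmetric := isSymmetric_toEuclideanLin_iff.mpr hQ.isSelfAdjoint

theorem trace_conjTranspose_mul_self_of_isStarProjection {R : Type*} [CommRing R] [StarRing R]
    {P Q : Matrix n n R} (hP : IsStarProjection P) (hQ : IsStarProjection Q) :
    ((Q * P)ᴴ * (Q * P)).trace = (P * Q).trace := by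
  rw [conjTranspose_mul, ← star_eq_conjTranspose, ← star_eq_conjTranspose, hP.isSelfAdjoint.star_eq,
    hQ.isSelfAdjoint.star_eq, mul_assoc, ← mul_assoc Q, hQ.isIdempotentElem.eq, ← mul_assoc,
    trace_mul_comm, ← mul_assoc, hP.isIdempotentElem.eq]

end Matrix

/-- For orthogonal projectors `Π₀`, `Π₁` and any unit vector `ψ`,
`⟨ψ|(Π₀ + Π₁)|ψ⟩ ≤ 1 + 3√(Tr(Π₀Π₁))`. -/
theorem sum_two_projectors_quadform_bound (D : ℕ)
    (Q0 Q1 : Matrix (Fin D) (Fin D) ℂ)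
    (h0 : Q0 * Q0 = Q0) (h0h : Q0.IsHermitian)
    (h1 : Q1 * Q1 = Q1) (h1h : Q1.IsHermitian)
    (ψ : Fin D → ℂ) (hψ : ∑ i, ‖ψ i‖ ^ 2 = 1) :
    (∑ i, star (ψ i) * (Q0 + Q1).mulVec ψ i).re
      ≤ 1 + 3 * Real.sqrt ((Q0 * Q1).trace.re) := by
  have hP0 : IsStarProjection Q0 := ⟨h0, h0h⟩
  have hP1 : IsStarProjection Q1 := ⟨h1, h1h⟩
  set x : EuclideanSpace ℂ (Fin D) := toLp 2 ψ
  have hx : ‖x‖ = 1 := by simp [x, EuclideanSpace.norm_eq, hψ]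
  have hquad : ∑ i, star (ψ i) * (Q0 + Q1).mulVec ψ i
      = ⟪x, toEuclideanLin Q0 x + toEuclideanLin Q1 x⟫_ℂ := by
    rw [← LinearMap.add_apply, ← map_add, EuclideanSpace.inner_eq_star_dotProduct, dotProduct_comm]
    rfl
  have hQ1Q0 : ‖toEuclideanLin Q1 (toEuclideanLin Q0 x)‖ ≤ √((Q0 * Q1).trace.re) := by
    have h := norm_toEuclideanLin_apply_le (Q1 * Q0) x
    rwa [trace_conjTranspose_mul_self_of_isStarProjection hP0 hP1, hx, mul_one, toLpLin_mul_same,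
      re_to_complex] at h
  calc (∑ i, star (ψ i) * (Q0 + Q1).mulVec ψ i).re
      = re ⟪x, toEuclideanLin Q0 x + toEuclideanLin Q1 x⟫_ℂ := by rw [hquad]; rfl
    _ ≤ 1 + 3 * ‖toEuclideanLin Q1 (toEuclideanLin Q0 x)‖ :=
      (isSymmetricProjection_toEuclideanLin hP0).re_inner_add_le
        (isSymmetricProjection_toEuclideanLin hP1) hx
    _ ≤ 1 + 3 * √((Q0 * Q1).trace.re) := by gcongr
end

section
/- Let Π₀ be a projector of rank at most 2^λ on an m-qubit space and let Π₁ = P Π₀ P for an m-qubit Pauli P. Then E_{P ← P_m}[Tr(Π₀Π₁)] ≤ 2^{2λ−m}, and consequently for every δ > 0, Pr_{P ← P_m}[Tr(Π₀Π₁) ≥ δ·2^{2λ}] ≤ δ^{-1}·2^{2λ−m}. -/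
open scoped BigOperators Classical
open Matrix

/-- The `m`-qubit Pauli operator `X^a Z^b`: `(X^a Z^b)|j⟩ = (-1)^{b·j} |j ⊕ a⟩`. -/
noncomputable def pauli (m : ℕ) (a b : Fin m → ZMod 2) :
    Matrix (Fin m → ZMod 2) (Fin m → ZMod 2) ℂ :=
  Matrix.of fun i j => if i = j + a then (-1 : ℂ) ^ (∑ k, (b k * j k).val) else 0

/-! Summing `P M P†` over all `4^m` Paulis `P = X^a Z^b` gives `2^m · Tr(M) · 1`: the sum over `b`
kills the off-diagonal entries by orthogonality of the characters `b ↦ (-1)^{b·j}`, and the sum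
over `a` spreads the diagonal uniformly. Hence the mean of `Tr(Π₀ P Π₀ P†)` is
`(Tr Π₀)² / 2^m = rank(Π₀)² / 2^m`. Each overlap equals `Tr((Π₀PΠ₀)(Π₀PΠ₀)†) ≥ 0`, so Markov's
inequality gives the tail bound. -/

open Finset

section Walsh

variable {ι R : Type*} [Fintype ι] [CommRing R]

def walsh (b j : ι → ZMod 2) : R :=
  (-1) ^ ∑ k, (b k * j k).val

theorem walsh_eq_prod (b j : ι → ZMod 2) :
    (walsh b j : R) = ∏ k, (-1) ^ (b k * j k).val :=
  (prod_pow_eq_pow_sum _ _ _).symm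

theorem walsh_add (b x y : ι → ZMod 2) :
    (walsh b (x + y) : R) = walsh b x * walsh b y := by
  have parity : ∀ c u v : ZMod 2, (c * (u + v)).val % 2 = ((c * u).val + (c * v).val) % 2 := by
    decide
  simp only [walsh_eq_prod, ← prod_mul_distrib, ← pow_add, Pi.add_apply]
  refine prod_congr rfl fun k _ => ?_
  rw [neg_one_pow_eq_pow_mod_two, neg_one_pow_eq_pow_mod_two (n := _ + _), parity]

theorem star_walsh [StarRing R] (b j : ι → ZMod 2) : star (walsh b j : R) = walsh b j := by
  rw [walsh, star_pow, star_neg, star_one]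

variable [DecidableEq ι]

theorem sum_walsh (z : ι → ZMod 2) :
    ∑ b, (walsh b z : R) = if z = 0 then 2 ^ Fintype.card ι else 0 := by
  have coord (u : ZMod 2) : ∑ c : ZMod 2, (-1 : R) ^ (c * u).val = if u = 0 then 2 else 0 := by
    rw [show (univ : Finset (ZMod 2)) = {0, 1} from rfl, sum_pair zero_ne_one]
    obtain rfl | rfl : u = 0 ∨ u = 1 := by decide +revert
    · norm_num
    · simp [ZMod.val_one]
  simp_rw [walsh_eq_prod]
  rw [← Fintype.prod_sum fun k (c : ZMod 2) => (-1 : R) ^ (c * z k).val]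
  simp_rw [coord, prod_ite_zero, prod_const, card_univ, funext_iff, Pi.zero_apply, mem_univ,
    true_imp_iff]

theorem sum_walsh_mul_walsh (x y : ι → ZMod 2) :
    ∑ b, (walsh b x * walsh b y : R) = if x = y then 2 ^ Fintype.card ι else 0 := by
  simp_rw [← walsh_add, sum_walsh, add_eq_zero_iff_eq_neg, ZModModule.neg_eq_self]

end Walsh

section Pauli

variable {m : ℕ} (a b : Fin m → ZMod 2)

theorem pauli_apply (i j : Fin m → ZMod 2) :
    pauli m a b i j = if j = i + a then walsh b j else 0 := by
  refine if_congr ?_ rfl rfl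
  constructor <;> rintro rfl <;> rw [add_assoc, ZModModule.add_self, add_zero]

theorem conjTranspose_pauli_apply (i j : Fin m → ZMod 2) :
    (pauli m a b)ᴴ i j = if i = j + a then walsh b i else 0 := by
  rw [conjTranspose_apply, pauli_apply]
  split_ifs <;> simp [star_walsh]

theorem pauli_mul_mul_conjTranspose_apply (M : Matrix (Fin m → ZMod 2) (Fin m → ZMod 2) ℂ)
    (i j : Fin m → ZMod 2) :
    (pauli m a b * M * (pauli m a b)ᴴ) i j
      = walsh b (i + a) * walsh b (j + a) * M (i + a) (j + a) := by
  simp only [mul_apply, pauli_apply, conjTranspose_pauli_apply, ite_mul, mul_ite, zero_mul,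
    mul_zero, sum_ite_eq', mem_univ, if_true]
  ring

theorem sum_pauli_mul_mul_conjTranspose (M : Matrix (Fin m → ZMod 2) (Fin m → ZMod 2) ℂ) :
    ∑ a, ∑ b, pauli m a b * M * (pauli m a b)ᴴ = (2 ^ m * M.trace) • (1 : Matrix _ _ ℂ) := by
  ext i j
  simp only [Matrix.sum_apply, pauli_mul_mul_conjTranspose_apply, ← sum_mul, sum_walsh_mul_walsh,
    add_left_inj, Fintype.card_fin, Matrix.smul_apply, one_apply, smul_eq_mul]
  split_ifs with hij
  · subst hij
    rw [trace, ← mul_sum, mul_one]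
    exact congrArg _ (Equiv.sum_comp (Equiv.addLeft i) fun k => M k k)
  · simp

theorem sum_trace_mul_pauli_mul_mul_conjTranspose
    (N M : Matrix (Fin m → ZMod 2) (Fin m → ZMod 2) ℂ) :
    ∑ a, ∑ b, (N * (pauli m a b * M * (pauli m a b)ᴴ)).trace = 2 ^ m * M.trace * N.trace := by
  have h := congrArg (fun X => (N * X).trace) (sum_pauli_mul_mul_conjTranspose M)
  simpa only [mul_sum, trace_sum, Matrix.mul_smul, mul_one, trace_smul, smul_eq_mul] using h

end Pauli

section Projection

variable {n : Type*} [Fintype n]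

theorem Matrix.trace_eq_rank_of_isIdempotentElem [DecidableEq n] {K : Type*} [Field K]
    {A : Matrix n n K} (hA : IsIdempotentElem A) : A.trace = A.rank := by
  have hA' : IsIdempotentElem (toLin' A) := hA.map toLinAlgEquiv'
  rw [← trace_toLin'_eq, (LinearMap.IsIdempotentElem.isProj_range _ hA').trace, rank,
    toLin'_apply']

theorem Matrix.trace_mul_mul_mul_conjTranspose_nonneg {R : Type*} [CommRing R] [PartialOrder R]
    [StarRing R] [StarOrderedRing R] {Q : Matrix n n R} (hQ : IsStarProjection Q)
    (P : Matrix n n R) : 0 ≤ (Q * (P * Q * Pᴴ)).trace := by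
  have hQQ : Q * Q = Q := hQ.isIdempotentElem
  have hQH : Qᴴ = Q := hQ.isSelfAdjoint
  have hsq : (Q * P * Q) * (Q * P * Q)ᴴ = Q * (P * Q * Pᴴ) * Q := by
    simp only [conjTranspose_mul, hQH, Matrix.mul_assoc]
    rw [← Matrix.mul_assoc Q Q, hQQ]
  calc (0 : R) ≤ ((Q * P * Q) * (Q * P * Q)ᴴ).trace :=
        (posSemidef_self_mul_conjTranspose _).trace_nonneg
    _ = (Q * (P * Q * Pᴴ)).trace := by rw [hsq, trace_mul_comm, ← Matrix.mul_assoc, hQQ]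

end Projection

theorem sum_re_trace_mul_pauli_mul_mul_conjTranspose_of_isIdempotentElem {m : ℕ}
    {Q : Matrix (Fin m → ZMod 2) (Fin m → ZMod 2) ℂ} (hQ : IsIdempotentElem Q) :
    ∑ a, ∑ b, (Q * (pauli m a b * Q * (pauli m a b)ᴴ)).trace.re = 2 ^ m * (Q.rank : ℝ) ^ 2 := by
  have h := congrArg Complex.re (sum_trace_mul_pauli_mul_mul_conjTranspose Q Q)
  simp only [trace_eq_rank_of_isIdempotentElem hQ, Complex.re_sum, ← Complex.ofReal_natCast,
    ← Complex.ofReal_pow, ← Complex.ofReal_ofNat, ← Complex.ofReal_mul, Complex.ofReal_re] at h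
  rw [h, mul_assoc, sq]

theorem Finset.card_filter_le_sum_div {α K : Type*} [Field K] [LinearOrder K]
    [IsStrictOrderedRing K] (s : Finset α) (f : α → K) {c : K} (hc : 0 < c)
    (hf : ∀ i ∈ s, 0 ≤ f i) : (#{i ∈ s | c ≤ f i} : K) ≤ (∑ i ∈ s, f i) / c := by
  rw [le_div_iff₀ hc]
  calc (#{i ∈ s | c ≤ f i} : K) * c ≤ ∑ i ∈ s with c ≤ f i, f i := by
        rw [← nsmul_eq_mul]; exact card_nsmul_le_sum _ _ _ fun i hi => (mem_filter.mp hi).2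
    _ ≤ ∑ i ∈ s, f i := sum_le_sum_of_subset_of_nonneg (filter_subset _ _) fun i hi _ => hf i hi

/-- For a projector `Π₀` of rank at most `2^λ` on the `m`-qubit space and
`Π₁ = P Π₀ P†` for a uniformly random `m`-qubit Pauli `P`:
`E_P[Tr(Π₀Π₁)] ≤ 2^{2λ−m}`, and for every `δ > 0` the fraction of Paulis with
`Tr(Π₀Π₁) ≥ δ·2^{2λ}` is at most `δ⁻¹·2^{2λ−m}`. -/
theorem pauli_conjugated_projector_overlap (m lam : ℕ)
    (Q0 : Matrix (Fin m → ZMod 2) (Fin m → ZMod 2) ℂ)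
    (hproj : Q0 * Q0 = Q0) (hherm : Q0.IsHermitian) (hrank : Q0.rank ≤ 2 ^ lam) :
    ((1 / 4 ^ m : ℝ) * ∑ a : Fin m → ZMod 2, ∑ b : Fin m → ZMod 2,
        (Q0 * (pauli m a b * Q0 * (pauli m a b)ᴴ)).trace.re
      ≤ 2 ^ (2 * lam) / 2 ^ m)
    ∧ ∀ δ : ℝ, 0 < δ →
      (((Finset.univ.filter (fun p : (Fin m → ZMod 2) × (Fin m → ZMod 2) =>
          δ * 2 ^ (2 * lam) ≤
            (Q0 * (pauli m p.1 p.2 * Q0 * (pauli m p.1 p.2)ᴴ)).trace.re)).card : ℝ)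
        / 4 ^ m ≤ δ⁻¹ * 2 ^ (2 * lam) / 2 ^ m) := by
  have hsum := sum_re_trace_mul_pauli_mul_mul_conjTranspose_of_isIdempotentElem hproj
  have hrank_sq : (Q0.rank : ℝ) ^ 2 ≤ 2 ^ (2 * lam) := by
    rw [pow_mul']
    gcongr
    exact_mod_cast hrank
  have h4 : (4 : ℝ) ^ m = 2 ^ m * 2 ^ m := by rw [← mul_pow]; norm_num
  refine ⟨?_, fun δ hδ => ?_⟩
  · calc _ = (Q0.rank : ℝ) ^ 2 / 2 ^ m := by rw [hsum, h4]; field_simp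
      _ ≤ 2 ^ (2 * lam) / 2 ^ m := by gcongr
  · have hmarkov := card_filter_le_sum_div (c := δ * 2 ^ (2 * lam)) univ
      (fun p : (Fin m → ZMod 2) × (Fin m → ZMod 2) =>
        (Q0 * (pauli m p.1 p.2 * Q0 * (pauli m p.1 p.2)ᴴ)).trace.re) (by positivity)
      fun p _ => open ComplexOrder in
        (Complex.nonneg_iff.mp (trace_mul_mul_mul_conjTranspose_nonneg ⟨hproj, hherm⟩ _)).1
    rw [Fintype.sum_prod_type, hsum] at hmarkov
    calc _ ≤ 2 ^ m * (Q0.rank : ℝ) ^ 2 / (δ * 2 ^ (2 * lam)) / 4 ^ m := by gcongr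
      _ ≤ 2 ^ m * 2 ^ (2 * lam) / (δ * 2 ^ (2 * lam)) / 4 ^ m := by gcongr
      _ = δ⁻¹ * 1 / 2 ^ m := by rw [h4]; field_simp
      _ ≤ δ⁻¹ * 2 ^ (2 * lam) / 2 ^ m := by gcongr; exact one_le_pow₀ one_le_two
end
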